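/- arXiv:1204.4279 — 2 statements merged into one kernel-verified Lean document; each statement's English description precedes it below -/
import Mathlib

section
/- For every integer d ≥ 5, the quotient Stab_{Γ_d}(1)/Stab_{Γ_d}(2) of the first by the second level stabilizer of the Fabrykowski–Gupta group Γ_d is isomorphic to the direct product of d copies of the cyclic group ℤ_d, with the images of g_0 = r, g_1 = r^a, …, g_{d−1} = r^{a^{d−1}} forming an independent generating set. -/
namespace FG

variable (d : ℕ) [NeZero d]

/-- The rooted-tree automorphism `a` of the `d`-regular rooted tree (vertex set: the free
monoid `{0,…,d-1}^*`), acting by `(x w)^a = ((x+1) mod d) w`. -/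
def aFun : List (Fin d) → List (Fin d)
  | [] => []
  | x :: w => (x + 1) :: w

def aInv : List (Fin d) → List (Fin d)
  | [] => []
  | x :: w => (x - 1) :: w

lemma aInv_aFun : ∀ w, aInv d (aFun d w) = w := by
  intro w; cases w <;> simp [aFun, aInv]

lemma aFun_aInv : ∀ w, aFun d (aInv d w) = w := by
  intro w; cases w <;> simp [aFun, aInv]

def aPerm : Equiv.Perm (List (Fin d)) :=
  ⟨aFun d, aInv d, aInv_aFun d, aFun_aInv d⟩

/-- The rooted-tree automorphism `r`:
`(0 w)^r = 0 w^a`, `(x w)^r = x w` for `1 ≤ x ≤ d-2`, `((d-1) w)^r = (d-1) w^r`. -/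
def rFun : List (Fin d) → List (Fin d)
  | [] => []
  | x :: w => if x = 0 then x :: aFun d w else if x = -1 then x :: rFun w else x :: w

def rInv : List (Fin d) → List (Fin d)
  | [] => []
  | x :: w => if x = 0 then x :: aInv d w else if x = -1 then x :: rInv w else x :: w

lemma rInv_rFun : ∀ w, rInv d (rFun d w) = w := by
  intro w
  induction w with
  | nil => simp [rFun, rInv]
  | cons x w ih =>
    by_cases h0 : x = 0
    · simp [rFun, rInv, h0, aInv_aFun]
    · by_cases h1 : x = -1
      · subst h1
        have hd : ¬ d = 1 := by simpa using h0
        simp [rFun, rInv, hd, ih]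
      · simp [rFun, rInv, h0, h1]

lemma rFun_rInv : ∀ w, rFun d (rInv d w) = w := by
  intro w
  induction w with
  | nil => simp [rFun, rInv]
  | cons x w ih =>
    by_cases h0 : x = 0
    · simp [rFun, rInv, h0, aFun_aInv]
    · by_cases h1 : x = -1
      · subst h1
        have hd : ¬ d = 1 := by simpa using h0
        simp [rFun, rInv, hd, ih]
      · simp [rFun, rInv, h0, h1]

def rPerm : Equiv.Perm (List (Fin d)) :=
  ⟨rFun d, rInv d, rInv_rFun d, rFun_rInv d⟩

/-- The Fabrykowski–Gupta group `Γ_d`, as the subgroup of the permutation group of the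
free monoid `{0,…,d-1}^*` generated by the tree automorphisms `a` and `r`. -/
def Gamma : Subgroup (Equiv.Perm (List (Fin d))) :=
  Subgroup.closure {aPerm d, rPerm d}

/-- The generator `a` as an element of `Γ_d`. -/
def aG : ↥(Gamma d) :=
  ⟨aPerm d, Subgroup.subset_closure (Set.mem_insert _ _)⟩

/-- The generator `r` as an element of `Γ_d`. -/
def rG : ↥(Gamma d) :=
  ⟨rPerm d, Subgroup.subset_closure (Set.mem_insert_iff.mpr (Or.inr rfl))⟩

/-- The `n`-th level stabilizer `Stab_{Γ_d}(n)`: all elements of `Γ_d` fixing every word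
of length `n`. -/
def Stab (n : ℕ) : Subgroup ↥(Gamma d) where
  carrier := { g | ∀ w : List (Fin d), w.length = n → (g : Equiv.Perm (List (Fin d))) w = w }
  one_mem' := by intro w _; rfl
  mul_mem' := by
    intro g h hg hh w hw
    have : ((g * h : ↥(Gamma d)) : Equiv.Perm (List (Fin d))) w
        = (g : Equiv.Perm (List (Fin d))) ((h : Equiv.Perm (List (Fin d))) w) := rfl
    rw [this, hh w hw, hg w hw]
  inv_mem' := by
    intro g hg w hw
    have h1 := hg w hw
    calc ((g⁻¹ : ↥(Gamma d)) : Equiv.Perm (List (Fin d))) w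
        = (g : Equiv.Perm (List (Fin d)))⁻¹ ((g : Equiv.Perm (List (Fin d))) w) := by
          rw [h1]; rfl
      _ = w := by simp

/-- The conjugate `g_i = r^{a^i} = a^{-i} r a^i` in `Γ_d`. -/
def gG (i : ℕ) : ↥(Gamma d) := (aG d ^ i)⁻¹ * rG d * aG d ^ i

end FG

/-
Every element of `Γ_d` acts on the first two levels of the tree as an element of the wreath
product `ℤ_d ≀ ℤ_d`, i.e. by `x ↦ x + β` and `x y ↦ (x + β) (y + c x)`: this holds for `a` and `r`
and is preserved by products and inverses. On `Stab(1)` we have `β = 0`, so an element is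
recorded by its vector of shifts `c ∈ (ℤ_d)^d`; this is a homomorphism with kernel `Stab(2)`.
Since `g_i` shifts only below the vertex `-i`, the `g_i` hit a basis, whence surjectivity.
-/

theorem MonoidHom.surjective_of_mulSingle_ofAdd_one_mem_range {G ι : Type*} [Group G]
    [Fintype ι] [DecidableEq ι] {n : ℕ} (φ : G →* (ι → Multiplicative (ZMod n)))
    (h : ∀ i : ι, Pi.mulSingle i (Multiplicative.ofAdd (1 : ZMod n)) ∈ φ.range) :
    Function.Surjective φ := by
  intro f
  rw [← MonoidHom.mem_range, ← Finset.univ_prod_mulSingle f]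
  refine Subgroup.prod_mem _ fun i _ => ?_
  obtain ⟨k, hk⟩ := ZMod.intCast_surjective (Multiplicative.toAdd (f i))
  rw [← ofAdd_toAdd (f i), ← hk, ← zsmul_one, ofAdd_zsmul, Pi.mulSingle_zpow]
  exact zpow_mem (h i) k

namespace FG

open Equiv Fin.NatCast

variable {d : ℕ} [NeZero d]

lemma aPerm_pow_apply_cons (n : ℕ) (x : Fin d) (w : List (Fin d)) :
    (aPerm d ^ n) (x :: w) = (x + n) :: w := by
  induction n generalizing x with
  | zero => simp
  | succ n ih =>
    rw [pow_succ', Perm.mul_apply, ih, Nat.cast_succ, ← add_assoc]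
    rfl

lemma rPerm_apply_singleton (x : Fin d) : rPerm d [x] = [x] := by
  change rFun d [x] = [x]
  rw [rFun]
  split_ifs <;> rfl

lemma rPerm_apply_pair (x y : Fin d) :
    rPerm d [x, y] = [x, y + if x = 0 then 1 else 0] := by
  change rFun d [x, y] = _
  by_cases h0 : x = 0
  · simp [rFun, aFun, h0]
  · by_cases h1 : x = -1
    · rw [rFun, if_neg h0, if_pos h1, if_neg h0, add_zero]
      exact congrArg (x :: ·) (rPerm_apply_singleton y)
    · simp [rFun, h0, h1]

variable (d) in
def levelTwoWreath : Subgroup (Perm (List (Fin d))) where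
  carrier := {g | ∃ (β : Fin d) (c : Fin d → Fin d),
    (∀ x, g [x] = [x + β]) ∧ ∀ x y, g [x, y] = [x + β, y + c x]}
  one_mem' := ⟨0, 0, by simp, by simp⟩
  mul_mem' := by
    rintro g h ⟨β, c, hg₁, hg₂⟩ ⟨β', c', hh₁, hh₂⟩
    refine ⟨β' + β, fun x => c' x + c (x + β'), fun x => ?_, fun x y => ?_⟩
    · rw [Perm.mul_apply, hh₁, hg₁, add_assoc]
    · rw [Perm.mul_apply, hh₂, hg₂, add_assoc, add_assoc]
  inv_mem' := by
    rintro g ⟨β, c, hg₁, hg₂⟩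
    refine ⟨-β, fun x => -c (x - β), fun x => ?_, fun x y => ?_⟩
    · rw [Perm.inv_eq_iff_eq, hg₁, neg_add_cancel_right]
    · rw [Perm.inv_eq_iff_eq, ← sub_eq_add_neg, hg₂, sub_add_cancel, neg_add_cancel_right]

lemma Gamma_le_levelTwoWreath : Gamma d ≤ levelTwoWreath d := by
  refine Subgroup.closure_le _ |>.mpr ?_
  rw [Set.insert_subset_iff, Set.singleton_subset_iff]
  constructor
  · exact ⟨1, 0, fun x => rfl, fun x y => by simp [aPerm, aFun]⟩
  · exact ⟨0, fun x => if x = 0 then 1 else 0, by simp [rPerm_apply_singleton],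
      by simp [rPerm_apply_pair]⟩

/-- For `g` fixing the first level, the shift that `g` applies to the labels below the vertex
`x`. -/
def levelTwoShift (g : Perm (List (Fin d))) (x : Fin d) : Fin d :=
  (g [x, 0]).getD 1 0

lemma apply_pair_of_mem_stab_one {g : Gamma d} (hg : g ∈ Stab d 1) (x y : Fin d) :
    (g : Perm (List (Fin d))) [x, y] = [x, y + levelTwoShift g x] := by
  obtain ⟨β, c, hg₁, hg₂⟩ := Gamma_le_levelTwoWreath g.2
  have hβ : β = 0 := by simpa using (hg₁ 0).symm.trans (hg [0] rfl)
  have hpair : ∀ y, (g : Perm (List (Fin d))) [x, y] = [x, y + c x] := by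
    simpa [hβ] using hg₂ x
  simp [levelTwoShift, hpair]

lemma levelTwoShift_mul {g h : Gamma d} (hg : g ∈ Stab d 1) (hh : h ∈ Stab d 1) (x : Fin d) :
    levelTwoShift ((g : Perm (List (Fin d))) * (h : Perm (List (Fin d)))) x =
      levelTwoShift g x + levelTwoShift h x := by
  conv_lhs => rw [levelTwoShift, Perm.mul_apply,
    apply_pair_of_mem_stab_one hh, apply_pair_of_mem_stab_one hg]
  simp [add_comm]

lemma mem_stab_two_iff {g : Gamma d} (hg : g ∈ Stab d 1) :
    g ∈ Stab d 2 ↔ ∀ x, levelTwoShift (g : Perm (List (Fin d))) x = 0 := by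
  constructor
  · intro hg₂ x
    simp [levelTwoShift, hg₂ [x, 0] rfl]
  · intro hshift w hw
    obtain ⟨x, y, rfl⟩ := List.length_eq_two.mp hw
    rw [apply_pair_of_mem_stab_one hg, hshift, add_zero]

variable (d) in
/-- Coordinate `j` records the shift below the vertex `-j`, so that `g_j` is sent to the `j`-th
basis vector. -/
def stabOneHom : Stab d 1 →* (Fin d → Multiplicative (ZMod d)) where
  toFun g j := Multiplicative.ofAdd (ZMod.finEquiv d (levelTwoShift (g : Perm (List (Fin d))) (-j)))
  map_one' := by
    funext j
    simp [levelTwoShift]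
  map_mul' g h := by
    funext j
    simp only [Subgroup.coe_mul, Pi.mul_apply]
    rw [levelTwoShift_mul g.2 h.2, map_add, ofAdd_add]

lemma stabOneHom_ker : (stabOneHom d).ker = (Stab d 2).subgroupOf (Stab d 1) := by
  ext g
  rw [MonoidHom.mem_ker, Subgroup.mem_subgroupOf, mem_stab_two_iff g.2, funext_iff,
    (Equiv.neg (Fin d)).forall_congr_left]
  simp [stabOneHom]

lemma gG_apply_singleton (i : ℕ) (x : Fin d) : (gG d i : Perm (List (Fin d))) [x] = [x] := by
  simp only [gG, aG, rG, Subgroup.coe_mul, Subgroup.coe_inv, Subgroup.coe_pow, Perm.mul_apply,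
    Perm.inv_eq_iff_eq]
  rw [aPerm_pow_apply_cons, rPerm_apply_singleton]

lemma gG_apply_pair (i : ℕ) (x y : Fin d) :
    (gG d i : Perm (List (Fin d))) [x, y] = [x, y + if x + i = 0 then 1 else 0] := by
  simp only [gG, aG, rG, Subgroup.coe_mul, Subgroup.coe_inv, Subgroup.coe_pow, Perm.mul_apply,
    Perm.inv_eq_iff_eq]
  rw [aPerm_pow_apply_cons, rPerm_apply_pair, aPerm_pow_apply_cons]

lemma gG_mem_stab_one (i : ℕ) : gG d i ∈ Stab d 1 := by
  intro w hw
  obtain ⟨x, rfl⟩ := List.length_eq_one_iff.mp hw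
  exact gG_apply_singleton i x

lemma stabOneHom_of_coe_eq_gG (i : Fin d) (g : Stab d 1) (hg : (g : Gamma d) = gG d i) :
    stabOneHom d g = Pi.mulSingle i (Multiplicative.ofAdd (1 : ZMod d)) := by
  funext j
  rcases eq_or_ne j i with rfl | hji
  · simp [stabOneHom, levelTwoShift, hg, gG_apply_pair]
  · simp [stabOneHom, levelTwoShift, hg, gG_apply_pair, neg_add_eq_zero, hji]

end FG

theorem stmt_5_general (d : ℕ) [NeZero d] :
    (∀ i : ℕ, FG.gG d i ∈ FG.Stab d 1) ∧
    ∃ φ : ↥(FG.Stab d 1) →* (Fin d → Multiplicative (ZMod d)),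
      Function.Surjective φ ∧
      φ.ker = (FG.Stab d 2).subgroupOf (FG.Stab d 1) ∧
      ∀ i : Fin d, ∀ x : ↥(FG.Stab d 1), (x : ↥(FG.Gamma d)) = FG.gG d (i : ℕ) →
        φ x = Pi.mulSingle i (Multiplicative.ofAdd (1 : ZMod d)) := by
  refine ⟨FG.gG_mem_stab_one, FG.stabOneHom d, ?_, FG.stabOneHom_ker,
    FG.stabOneHom_of_coe_eq_gG⟩
  exact (FG.stabOneHom d).surjective_of_mulSingle_ofAdd_one_mem_range fun i =>
    ⟨⟨FG.gG d i, FG.gG_mem_stab_one i⟩, FG.stabOneHom_of_coe_eq_gG i _ rfl⟩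

/-- For every `d ≥ 5`, `Stab(1)/Stab(2) ≅ (ℤ_d)^d`, via an isomorphism under which the
images of `g_0 = r, g_1 = r^a, …, g_{d-1} = r^{a^{d-1}}` form an independent generating
set (they map to the standard "basis" of `(ℤ_d)^d`). -/
theorem stmt_5 (d : ℕ) [NeZero d] (hd : 5 ≤ d) :
    (∀ i : ℕ, FG.gG d i ∈ FG.Stab d 1) ∧
    ∃ φ : ↥(FG.Stab d 1) →* (Fin d → Multiplicative (ZMod d)),
      Function.Surjective φ ∧
      φ.ker = (FG.Stab d 2).subgroupOf (FG.Stab d 1) ∧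
      ∀ i : Fin d, ∀ x : ↥(FG.Stab d 1), (x : ↥(FG.Gamma d)) = FG.gG d (i : ℕ) →
        φ x = Pi.mulSingle i (Multiplicative.ofAdd (1 : ZMod d)) :=
  stmt_5_general d
end

section
/- For every integer d ≥ 5, the quotient Γ_d/Stab_{Γ_d}(2) of the Fabrykowski–Gupta group by its second level stabilizer is isomorphic to the wreath product ℤ_d ≀ ℤ_d, that is, to the semidirect product (ℤ_d)^d ⋊ ℤ_d in which ℤ_d acts on the direct product (ℤ_d)^d by cyclically permuting the coordinates. -/
namespace FG

/-- Cyclic coordinate shift on `(ℤ_d)^d` by `z`. -/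
def cycAut (d : ℕ) [NeZero d] (z : ZMod d) :
    (ZMod d → Multiplicative (ZMod d)) ≃* (ZMod d → Multiplicative (ZMod d)) where
  toFun f i := f (i + z)
  invFun f i := f (i - z)
  left_inv f := by funext i; simp
  right_inv f := by funext i; simp
  map_mul' f g := rfl

/-- The action of `ℤ_d` on `(ℤ_d)^d` by cyclically permuting the coordinates. -/
def cyc (d : ℕ) [NeZero d] :
    Multiplicative (ZMod d) →* MulAut (ZMod d → Multiplicative (ZMod d)) where
  toFun z := cycAut d (Multiplicative.toAdd z)
  map_one' := by
    refine MulEquiv.ext fun f => funext fun i => ?_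
    simp [cycAut]
  map_mul' z w := by
    refine MulEquiv.ext fun f => funext fun i => ?_
    simp [cycAut, MulAut.mul_apply, add_assoc]

/-- The wreath product `ℤ_d ≀ ℤ_d = (ℤ_d)^d ⋊ ℤ_d`, with `ℤ_d` acting by cyclically
permuting the coordinates. -/
abbrev Wreath (d : ℕ) [NeZero d] :=
  (ZMod d → Multiplicative (ZMod d)) ⋊[cyc d] Multiplicative (ZMod d)

end FG

/-! The quotient `Γ_d / Stab(2)` is the image of `Γ_d` in the permutations of the `d²` words of
length two. Writing these words as pairs `(x, y) : ZMod d × ZMod d`, the generator `a` acts by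
`(x, y) ↦ (x + 1, y)` and `r` by `(x, y) ↦ (x, y + [x = 0])`. These are exactly the images of the
generators `(1, -1)` and `(δ₀, 0)` of `ℤ_d ≀ ℤ_d` under its faithful action on `ZMod d × ZMod d`,
so both groups have the same image, and the wreath product is that image. -/

theorem MonoidHom.exists_surjective_ker_eq_of_range_eq {G H P : Type*} [Group G] [Group H]
    [Group P] (ψ : G →* P) {W : H →* P} (hW : Function.Injective W) (h : ψ.range = W.range) :
    ∃ φ : G →* H, Function.Surjective φ ∧ φ.ker = ψ.ker := by
  let e : ψ.range ≃* H := (MulEquiv.subgroupCongr h).trans (MonoidHom.ofInjective hW).symm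
  exact ⟨(e : ψ.range →* H).comp ψ.rangeRestrict, e.surjective.comp ψ.rangeRestrict_surjective,
    by rw [MonoidHom.ker_mulEquiv_comp, MonoidHom.ker_rangeRestrict]⟩

namespace FG

open Equiv Multiplicative

section Words

def lengthPreserving (α : Type*) : Subgroup (Perm (List α)) where
  carrier := {g | ∀ w, (g w).length = w.length}
  one_mem' _ := rfl
  mul_mem' hg hh w := (hg _).trans (hh w)
  inv_mem' {g} hg w := by simpa using (hg (g⁻¹ w)).symm

variable {α : Type*}

def levelPerm (n : ℕ) : lengthPreserving α →* Perm {w : List α // w.length = n} where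
  toFun g := (g : Perm (List α)).subtypePerm fun w => by rw [g.2 w]
  map_one' := rfl
  map_mul' _ _ := rfl

lemma levelPerm_eq_one_iff {n : ℕ} (g : lengthPreserving α) :
    levelPerm n g = 1 ↔ ∀ w, w.length = n → (g : Perm (List α)) w = w := by
  simp only [Perm.ext_iff, Subtype.ext_iff, Subtype.forall]
  rfl

def lengthTwoEquiv (α : Type*) : α × α ≃ {w : List α // w.length = 2} where
  toFun p := ⟨[p.1, p.2], rfl⟩
  invFun w := (w.1[0]'(by omega), w.1[1]'(by omega))
  left_inv _ := rfl
  right_inv := by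
    rintro ⟨w, hw⟩
    obtain ⟨x, y, rfl⟩ := List.length_eq_two.mp hw
    rfl

end Words

variable (d : ℕ) [NeZero d]

lemma aPerm_mem_lengthPreserving : aPerm d ∈ lengthPreserving (Fin d) := by
  rintro (_ | _) <;> rfl

lemma rPerm_mem_lengthPreserving : rPerm d ∈ lengthPreserving (Fin d) := by
  intro w
  induction w with
  | nil => rfl
  | cons x w ih =>
    change (rFun d (x :: w)).length = _
    simp only [rFun]
    split_ifs
    · exact congrArg (· + 1) (aPerm_mem_lengthPreserving d w)
    · exact congrArg (· + 1) ih
    · rfl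

lemma Gamma_le_lengthPreserving : Gamma d ≤ lengthPreserving (Fin d) := by
  rw [Gamma, Subgroup.closure_le, Set.insert_subset_iff, Set.singleton_subset_iff]
  exact ⟨aPerm_mem_lengthPreserving d, rPerm_mem_lengthPreserving d⟩

lemma closure_aG_rG : Subgroup.closure {aG d, rG d} = ⊤ := by
  have h : Subgroup.closure (((↑) : Gamma d → _) ⁻¹' {aPerm d, rPerm d}) = ⊤ :=
    Subgroup.closure_closure_coe_preimage
  convert h using 2
  ext g
  simp [aG, rG, Subtype.ext_iff]

lemma aPerm_pair (x y : Fin d) : aPerm d [x, y] = [x + 1, y] := rfl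

lemma rPerm_pair (x y : Fin d) : rPerm d [x, y] = [x, if x = 0 then y + 1 else y] := by
  have hy : rFun d [y] = [y] := by
    simp only [rFun, aFun]
    split_ifs <;> rfl
  change rFun d [x, y] = _
  simp only [rFun, aFun] at hy ⊢
  split_ifs <;> simp_all

def levelTwoEquiv : ZMod d × ZMod d ≃ {w : List (Fin d) // w.length = 2} :=
  ((ZMod.finEquiv d).symm.toEquiv.prodCongr (ZMod.finEquiv d).symm.toEquiv).trans
    (lengthTwoEquiv (Fin d))

def levelTwo : Gamma d →* Perm (ZMod d × ZMod d) :=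
  ((levelTwoEquiv d).symm.permCongrHom : Perm _ →* Perm _).comp
    ((levelPerm 2).comp (Subgroup.inclusion (Gamma_le_lengthPreserving d)))

lemma ker_levelTwo : (levelTwo d).ker = Stab d 2 := by
  ext g
  rw [levelTwo, MonoidHom.ker_mulEquiv_comp, MonoidHom.mem_ker, MonoidHom.comp_apply,
    levelPerm_eq_one_iff]
  rfl

lemma levelTwo_apply_eq {g : Gamma d} {x y x' y' : ZMod d}
    (h : (g : Perm (List (Fin d))) [(ZMod.finEquiv d).symm x, (ZMod.finEquiv d).symm y] =
      [(ZMod.finEquiv d).symm x', (ZMod.finEquiv d).symm y']) :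
    levelTwo d g (x, y) = (x', y') := by
  change (levelTwoEquiv d).symm (levelPerm 2 _ (levelTwoEquiv d (x, y))) = _
  exact (Equiv.symm_apply_eq _).mpr (Subtype.ext h)

-- `inr z` has to move the first coordinate by `-z`, since `cyc` shifts coordinates by `+z`.
def wreathPerm : Wreath d →* Perm (ZMod d × ZMod d) where
  toFun w :=
    { toFun p := (p.1 - toAdd w.right, p.2 + toAdd (w.left (p.1 - toAdd w.right)))
      invFun p := (p.1 + toAdd w.right, p.2 - toAdd (w.left p.1))
      left_inv p := by simp
      right_inv p := by simp }
  map_one' := by ext <;> simp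
  map_mul' w₁ w₂ := by
    ext p <;> simp [cyc, cycAut, sub_add_eq_sub_sub_swap, add_comm, add_left_comm]

lemma wreathPerm_injective : Function.Injective (wreathPerm d) := by
  rw [injective_iff_map_eq_one]
  intro w hw
  have h p : wreathPerm d w p = p := Perm.ext_iff.mp hw p
  have hr : w.right = 1 := by simpa [wreathPerm] using congrArg Prod.fst (h (0, 0))
  ext i
  · simpa [wreathPerm, hr] using congrArg Prod.snd (h (i, 0))
  · simp [hr]

def wreathA : Wreath d := SemidirectProduct.inr (ofAdd (-1))

def wreathR : Wreath d := SemidirectProduct.inl (Pi.mulSingle 0 (ofAdd 1))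

lemma cyc_mulSingle (z i : ZMod d) (c : Multiplicative (ZMod d)) :
    cyc d (ofAdd z) (Pi.mulSingle i c) = Pi.mulSingle (i - z) c := by
  funext j
  simp [cyc, cycAut, Pi.mulSingle_apply, eq_sub_iff_add_eq]

open SemidirectProduct in
lemma closure_wreathA_wreathR : Subgroup.closure {wreathA d, wreathR d} = ⊤ := by
  set H := Subgroup.closure {wreathA d, wreathR d}
  have hinr (z : ZMod d) : (inr (ofAdd z) : Wreath d) ∈ H := by
    obtain ⟨k, rfl⟩ := ZMod.intCast_surjective z
    have hk : (inr (ofAdd (k : ZMod d)) : Wreath d) = inr (ofAdd (-1)) ^ (-k) := by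
      rw [← map_zpow, ← ofAdd_zsmul, smul_neg, zsmul_one, Int.cast_neg, neg_neg]
    rw [hk]
    exact zpow_mem (Subgroup.subset_closure (by simp [wreathA])) _
  have hinl_single (i : ZMod d) : Pi.mulSingle i (ofAdd 1) ∈ H.comap inl := by
    have hi : Pi.mulSingle i (ofAdd 1) = cyc d (ofAdd (-i)) (Pi.mulSingle 0 (ofAdd 1)) := by
      rw [cyc_mulSingle, zero_sub, neg_neg]
    rw [Subgroup.mem_comap, hi, inl_aut, ← ofAdd_neg, neg_neg]
    exact mul_mem (mul_mem (hinr _) (Subgroup.subset_closure (by simp [wreathR]))) (hinr _)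
  have hinl (f : ZMod d → Multiplicative (ZMod d)) : f ∈ H.comap inl := by
    rw [← Finset.univ_prod_mulSingle f]
    refine Subgroup.prod_mem _ fun i _ => ?_
    obtain ⟨n, hn⟩ := ZMod.natCast_zmod_surjective (toAdd (f i))
    rw [← ofAdd_toAdd (f i), ← hn, ← nsmul_one, ofAdd_nsmul, Pi.mulSingle_pow]
    exact pow_mem (hinl_single i) n
  exact eq_top_iff.mpr fun w _ =>
    inl_left_mul_inr_right w ▸ mul_mem (hinl w.left) (hinr (toAdd w.right))

lemma levelTwo_aG : levelTwo d (aG d) = wreathPerm d (wreathA d) := by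
  ext ⟨x, y⟩ : 1
  rw [levelTwo_apply_eq d (x' := x + 1) (y' := y) (by simp [aG, aPerm_pair])]
  simp [wreathPerm, wreathA]

lemma levelTwo_rG : levelTwo d (rG d) = wreathPerm d (wreathR d) := by
  ext ⟨x, y⟩ : 1
  rw [levelTwo_apply_eq d (x' := x) (y' := if x = 0 then y + 1 else y)
    (by simp [rG, rPerm_pair, apply_ite])]
  by_cases hx : x = 0 <;> simp [wreathPerm, wreathR, hx]

lemma range_levelTwo : (levelTwo d).range = (wreathPerm d).range := by
  rw [MonoidHom.range_eq_map, ← closure_aG_rG, MonoidHom.map_closure, Set.image_pair,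
    levelTwo_aG, levelTwo_rG, ← Set.image_pair, ← MonoidHom.map_closure,
    closure_wreathA_wreathR, ← MonoidHom.range_eq_map]

end FG

theorem stmt_6_general (d : ℕ) [NeZero d] :
    ∃ φ : ↥(FG.Gamma d) →* FG.Wreath d,
      Function.Surjective φ ∧ φ.ker = FG.Stab d 2 := by
  obtain ⟨φ, hφ, hker⟩ := (FG.levelTwo d).exists_surjective_ker_eq_of_range_eq
    (FG.wreathPerm_injective d) (FG.range_levelTwo d)
  exact ⟨φ, hφ, hker.trans (FG.ker_levelTwo d)⟩

/-- For every `d ≥ 5`, `Γ_d / Stab(2)` is isomorphic to the wreath product `ℤ_d ≀ ℤ_d`,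
i.e. there is a surjective homomorphism `Γ_d → (ℤ_d)^d ⋊ ℤ_d` with kernel `Stab(2)`. -/
theorem stmt_6 (d : ℕ) [NeZero d] (hd : 5 ≤ d) :
    ∃ φ : ↥(FG.Gamma d) →* FG.Wreath d,
      Function.Surjective φ ∧ φ.ker = FG.Stab d 2 :=
  stmt_6_general d
end
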